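/- arXiv:0812.1572 — 2 statements merged into one kernel-verified Lean document; each statement's English description precedes it below -/
import Mathlib

section
/- If b_1, …, b_n are unit vectors in ℝ^n with all pairwise inner products equal to x = (2γ² - n)/(2γ² + n(n-1)), then ∑_{i>j} ‖b_i - b_j‖ + γ‖∑_i b_i‖ = n·√(γ² + n(n-1)/2). -/
/-!
For unit vectors with constant pairwise inner product `x`, the Gram matrix gives
`‖b i - b j‖² = 2 (1 - x)` and `‖∑ i, b i‖² = n (1 + (n - 1) x)`. With `r = √(γ² + n(n-1)/2)`
and the given `x`, these are `(n / r)²` and `(γ n / r)²`, so the left side is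
`(n(n-1)/2 + γ²) · n / r = n r`.
-/

open RealInnerProductSpace Finset

theorem Fin.sum_cast_val (n : ℕ) : ∑ i : Fin n, ((i : ℕ) : ℝ) = n * (n - 1) / 2 := by
  rw [Fin.sum_univ_eq_sum_range (fun i => (i : ℝ)) n]
  induction n with
  | zero => simp
  | succ m ih => rw [sum_range_succ, ih]; push_cast; ring

theorem Fin.sum_sum_filter_lt_of_eq_const {n : ℕ} {f : Fin n → Fin n → ℝ} {c : ℝ}
    (hf : ∀ i j, j < i → f i j = c) :
    ∑ i : Fin n, ∑ j ∈ univ.filter (· < i), f i j = n * (n - 1) / 2 * c := by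
  rw [← Fin.sum_cast_val, sum_mul]
  refine sum_congr rfl fun i _ => ?_
  rw [sum_congr rfl fun j hj => hf i j (mem_filter.mp hj).2, Finset.sum_const, filter_gt_eq_Iio,
    Fin.card_Iio, nsmul_eq_mul]

section ConstantInner

variable {E ι : Type*} [NormedAddCommGroup E] [InnerProductSpace ℝ E] {b : ι → E} {x : ℝ}

theorem norm_sub_eq_sqrt_of_inner_eq (hb : ∀ i, ‖b i‖ = 1)
    (hx : ∀ i j, i ≠ j → ⟪b i, b j⟫ = x) {i j : ι} (hij : i ≠ j) :
    ‖b i - b j‖ = √(2 * (1 - x)) := by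
  rw [← Real.sqrt_sq (norm_nonneg _), norm_sub_sq_real, hb, hb, hx i j hij]
  ring_nf

theorem norm_sum_eq_sqrt_of_inner_eq [Fintype ι] (hb : ∀ i, ‖b i‖ = 1)
    (hx : ∀ i j, i ≠ j → ⟪b i, b j⟫ = x) :
    ‖∑ i, b i‖ = √(Fintype.card ι * (1 + (Fintype.card ι - 1) * x)) := by
  classical
  have hgram : ∀ i j, ⟪b i, b j⟫ = x + if i = j then 1 - x else 0 := by
    intro i j
    split_ifs with hij
    · rw [hij, real_inner_self_eq_norm_sq, hb]; ring
    · rw [hx i j hij, add_zero]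
  rw [← Real.sqrt_sq (norm_nonneg _), ← real_inner_self_eq_norm_sq, sum_inner]
  simp only [inner_sum, hgram, sum_add_distrib, sum_ite_eq, mem_univ, if_true, Finset.sum_const,
    card_univ, nsmul_eq_mul]
  ring_nf

end ConstantInner

theorem symmetric_config_value_identity (n : ℕ) {γ x : ℝ} (hγ : 0 < γ)
    (hx : x = (2 * γ ^ 2 - n) / (2 * γ ^ 2 + n * (n - 1))) :
    n * (n - 1) / 2 * √(2 * (1 - x)) + γ * √(n * (1 + (n - 1) * x))
      = n * √(γ ^ 2 + n * (n - 1) / 2) := by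
  have hpairs : (0 : ℝ) ≤ n * (n - 1) := by
    rcases n with _ | n
    · simp
    · push_cast; rw [add_sub_cancel_right]; positivity
  set r := √(γ ^ 2 + n * (n - 1) / 2)
  have hr : 0 < r := Real.sqrt_pos.mpr (by positivity)
  have hr2 : r ^ 2 = γ ^ 2 + n * (n - 1) / 2 := Real.sq_sqrt (by positivity)
  have hD : 2 * γ ^ 2 + n * (n - 1) ≠ (0 : ℝ) := by positivity
  have hdist : 2 * (1 - x) = (n / r) ^ 2 := by
    rw [hx, div_pow, hr2]; field_simp; ring
  have hsum : n * (1 + (n - 1) * x) = (γ * n / r) ^ 2 := by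
    rw [hx, div_pow, hr2]; field_simp; ring
  rw [hdist, hsum, Real.sqrt_sq (by positivity), Real.sqrt_sq (by positivity)]
  field_simp
  linear_combination (-2) * n * hr2

theorem value_at_symmetric_config_general (n : ℕ) (γ : ℝ) (hγ : 0 < γ)
    (b : Fin n → EuclideanSpace ℝ (Fin n)) (hb : ∀ i, ‖b i‖ = 1)
    (hx : ∀ i j, i ≠ j →
      ⟪b i, b j⟫ = (2 * γ ^ 2 - n) / (2 * γ ^ 2 + n * (n - 1))) :
    (∑ i : Fin n, ∑ j ∈ Finset.univ.filter (fun j => j < i), ‖b i - b j‖)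
        + γ * ‖∑ i : Fin n, b i‖
      = n * Real.sqrt (γ ^ 2 + n * (n - 1) / 2) := by
  rw [Fin.sum_sum_filter_lt_of_eq_const fun i j hji =>
      norm_sub_eq_sqrt_of_inner_eq hb hx hji.ne',
    norm_sum_eq_sqrt_of_inner_eq hb hx, Fintype.card_fin]
  exact symmetric_config_value_identity n hγ rfl

theorem value_at_symmetric_config (n : ℕ) (hn : 2 ≤ n) (γ : ℝ) (hγ : 0 < γ)
    (b : Fin n → EuclideanSpace ℝ (Fin n)) (hb : ∀ i, ‖b i‖ = 1)
    (hx : ∀ i j, i ≠ j →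
      ⟪b i, b j⟫ = (2 * γ ^ 2 - n) / (2 * γ ^ 2 + n * (n - 1))) :
    (∑ i : Fin n, ∑ j ∈ Finset.univ.filter (fun j => j < i), ‖b i - b j‖)
        + γ * ‖∑ i : Fin n, b i‖
      = n * Real.sqrt (γ ^ 2 + n * (n - 1) / 2) :=
  value_at_symmetric_config_general n γ hγ b hb hx
end

section
/- For any unit vectors b_1, …, b_n in a real inner product space and γ > 0, the quantity ∑_{i>j} ‖b_i - b_j‖ + γ‖∑_i b_i‖ is at most n·√(γ² + n(n-1)/2). -/
/-!
Write `M = n(n-1)/2` and `T = ‖∑ bᵢ‖`. Cauchy–Schwarz over the `M` pairs bounds the sum of the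
distances by `√M · √(∑_{j<i} ‖bᵢ - bⱼ‖²)`, and for unit vectors Lagrange's identity gives
`∑_{j<i} ‖bᵢ - bⱼ‖² = n² - T²`. A second Cauchy–Schwarz, in `ℝ²`, then gives
`√M · √(n² - T²) + γ T ≤ √(M + γ²) · √((n² - T²) + T²) = n √(γ² + M)`.
-/

open Finset

theorem Finset.sum_sum_le_sqrt_sum_card_mul_sqrt {ι κ : Type*} (s : Finset ι) (t : ι → Finset κ)
    (g : ι → κ → ℝ) :
    ∑ i ∈ s, ∑ j ∈ t i, g i j ≤
      √(∑ i ∈ s, (#(t i) : ℝ)) * √(∑ i ∈ s, ∑ j ∈ t i, g i j ^ 2) := by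
  simpa [sum_sigma', card_sigma] using
    Real.sum_mul_le_sqrt_mul_sqrt (s.sigma t) (fun _ ↦ 1) (fun p ↦ g p.1 p.2)

theorem Real.mul_add_mul_le_sqrt_mul_sqrt (a b x y : ℝ) :
    a * x + b * y ≤ √(a ^ 2 + b ^ 2) * √(x ^ 2 + y ^ 2) := by
  rw [← Real.sqrt_mul (by positivity)]
  exact Real.le_sqrt_of_sq_le (by nlinarith [sq_nonneg (a * y - b * x)])

section LinearOrder

variable {ι : Type*} [Fintype ι] [LinearOrder ι]

theorem Finset.sum_sum_filter_lt_add_self_of_symm {M : Type*} [AddCommMonoid M]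
    (f : ι → ι → M) (hf : ∀ i j, f i j = f j i) (hdiag : ∀ i, f i i = 0) :
    ∑ i, ∑ j ∈ univ.filter (· < i), f i j + ∑ i, ∑ j ∈ univ.filter (· < i), f i j =
      ∑ i, ∑ j, f i j := by
  have hsplit : ∀ i, ∑ j, f i j =
      ∑ j ∈ univ.filter (· < i), f i j + ∑ j ∈ univ.filter (i < ·), f i j := by
    intro i
    rw [sum_filter, sum_filter, ← sum_add_distrib]
    refine sum_congr rfl fun j _ ↦ ?_
    rcases lt_trichotomy j i with h | rfl | h
    · simp [h, h.not_gt]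
    · simp [hdiag]
    · simp [h, h.not_gt]
  have hswap :
      ∑ i, ∑ j ∈ univ.filter (i < ·), f i j = ∑ i, ∑ j ∈ univ.filter (· < i), f i j := by
    simp_rw [sum_filter]
    rw [sum_comm]
    simp_rw [hf]
  simp_rw [hsplit, sum_add_distrib, hswap]

theorem Finset.sum_card_filter_lt :
    ∑ i : ι, #(univ.filter (· < i)) = (Fintype.card ι).choose 2 := by
  have h := sum_sum_filter_lt_add_self_of_symm (fun i j : ι ↦ if i = j then 0 else 1)
    (fun i j ↦ by simp [eq_comm]) (fun i ↦ by simp)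
  have hlt : ∀ i : ι, ∑ j ∈ univ.filter (· < i), (if i = j then 0 else 1 : ℕ) =
      #(univ.filter (· < i)) := fun i ↦ by
    rw [card_eq_sum_ones]
    exact sum_congr rfl fun j hj ↦ if_neg (mem_filter.1 hj).2.ne'
  have hne : ∀ i : ι, ∑ j, (if i = j then 0 else 1 : ℕ) = Fintype.card ι - 1 :=
    fun i ↦ by simp [sum_ite, filter_not, card_sdiff, filter_eq]
  simp only [hlt, hne, sum_const, card_univ, smul_eq_mul] at h
  rw [Nat.choose_two_right]
  omega

theorem sum_sum_filter_lt_norm_sub_sq {H : Type*} [NormedAddCommGroup H] [InnerProductSpace ℝ H]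
    (b : ι → H) :
    ∑ i, ∑ j ∈ univ.filter (· < i), ‖b i - b j‖ ^ 2 =
      Fintype.card ι * ∑ i, ‖b i‖ ^ 2 - ‖∑ i, b i‖ ^ 2 := by
  have hhalf := sum_sum_filter_lt_add_self_of_symm (fun i j ↦ ‖b i - b j‖ ^ 2)
    (fun i j ↦ by rw [norm_sub_rev]) (fun i ↦ by simp)
  have hsq : ‖∑ i, b i‖ ^ 2 = ∑ i, ∑ j, inner ℝ (b i) (b j) := by
    rw [← real_inner_self_eq_norm_sq, sum_inner]
    simp_rw [inner_sum]
  have hfull : ∑ i, ∑ j, ‖b i - b j‖ ^ 2 =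
      2 * (Fintype.card ι * ∑ i, ‖b i‖ ^ 2 - ‖∑ i, b i‖ ^ 2) := by
    simp_rw [norm_sub_sq_real, sum_add_distrib, sum_sub_distrib, ← mul_sum, ← hsq]
    simp [← mul_sum]
    ring
  linarith

end LinearOrder

theorem upper_bound_Bbar_general (n : ℕ) (γ : ℝ)
    {H : Type*} [NormedAddCommGroup H] [InnerProductSpace ℝ H]
    (b : Fin n → H) (hb : ∀ i, ‖b i‖ = 1) :
    (∑ i : Fin n, ∑ j ∈ Finset.univ.filter (fun j => j < i), ‖b i - b j‖)
        + γ * ‖∑ i : Fin n, b i‖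
      ≤ n * Real.sqrt (γ ^ 2 + n * (n - 1) / 2) := by
  set T := ‖∑ i, b i‖
  set M : ℝ := n * (n - 1) / 2
  have hpairs : ∑ i : Fin n, (#(univ.filter (· < i)) : ℝ) = M := by
    rw [← Nat.cast_sum, sum_card_filter_lt, Nat.cast_choose_two, Fintype.card_fin]
  have hM : 0 ≤ M := hpairs ▸ sum_nonneg fun _ _ ↦ Nat.cast_nonneg _
  have hsq : ∑ i : Fin n, ∑ j ∈ univ.filter (· < i), ‖b i - b j‖ ^ 2 = n ^ 2 - T ^ 2 := by
    rw [sum_sum_filter_lt_norm_sub_sq]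
    simp [hb, T, sq]
  have hT : T ≤ n := (norm_sum_le _ _).trans (by simp [hb])
  calc _ ≤ √M * √(n ^ 2 - T ^ 2) + γ * T := by
        gcongr
        rw [← hpairs, ← hsq]
        exact sum_sum_le_sqrt_sum_card_mul_sqrt _ _ _
    _ ≤ √(√M ^ 2 + γ ^ 2) * √(√(n ^ 2 - T ^ 2) ^ 2 + T ^ 2) :=
        Real.mul_add_mul_le_sqrt_mul_sqrt ..
    _ = n * √(γ ^ 2 + M) := by
      rw [Real.sq_sqrt hM, Real.sq_sqrt (by nlinarith [norm_nonneg (∑ i, b i)]), sub_add_cancel,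
        Real.sqrt_sq (Nat.cast_nonneg n), add_comm, mul_comm]

theorem upper_bound_Bbar (n : ℕ) (hn : 2 ≤ n) (γ : ℝ) (hγ : 0 < γ)
    {H : Type*} [NormedAddCommGroup H] [InnerProductSpace ℝ H]
    (b : Fin n → H) (hb : ∀ i, ‖b i‖ = 1) :
    (∑ i : Fin n, ∑ j ∈ Finset.univ.filter (fun j => j < i), ‖b i - b j‖)
        + γ * ‖∑ i : Fin n, b i‖
      ≤ n * Real.sqrt (γ ^ 2 + n * (n - 1) / 2) :=
  upper_bound_Bbar_general n γ b hb
end
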